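/- arXiv:1105.4525 — 7 statements merged into one kernel-verified Lean document; each statement's English description precedes it below -/
import Mathlib

section
/- If Θ is an invertible positive-definite (hence self-adjoint) operator on a finite-dimensional complex Hilbert space and H satisfies H†Θ = ΘH, then every eigenvalue of H is real. -/
open scoped Matrix ComplexOrder

namespace Matrix

variable {n 𝕜 : Type*} [Fintype n]

theorem exists_mulVec_eq_smul_of_mem_spectrum [Field 𝕜] [DecidableEq n] {A : Matrix n n 𝕜}
    {μ : 𝕜} (hμ : μ ∈ spectrum 𝕜 A) : ∃ v ≠ 0, A *ᵥ v = μ • v := by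
  rw [← spectrum_toLin', ← Module.End.hasEigenvalue_iff_mem_spectrum] at hμ
  obtain ⟨v, hv, hv0⟩ := hμ.exists_hasEigenvector
  exact ⟨v, hv0, by simpa using hv⟩

variable [RCLike 𝕜] {H Θ : Matrix n n 𝕜}

/-- Pair `Hᴴ * Θ = Θ * H` with an eigenvector `v` against `v` itself: the two sides give
`star μ * c` and `μ * c` for `c = vᴴ Θ v`, which is nonzero by positivity. -/
theorem star_eq_of_mulVec_eq_smul_of_conjTranspose_mul_eq (hΘ : Θ.PosDef)
    (hD : Hᴴ * Θ = Θ * H) {μ : 𝕜} {v : n → 𝕜} (hv : v ≠ 0) (hHv : H *ᵥ v = μ • v) :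
    star μ = μ := by
  set c := star v ⬝ᵥ (Θ *ᵥ v)
  have hc : c ≠ 0 := (hΘ.dotProduct_mulVec_pos hv).ne'
  have hright : star v ⬝ᵥ ((Θ * H) *ᵥ v) = μ * c := by
    rw [← mulVec_mulVec, hHv, mulVec_smul, dotProduct_smul, smul_eq_mul]
  have hleft : star v ⬝ᵥ ((Hᴴ * Θ) *ᵥ v) = star μ * c := by
    rw [← mulVec_mulVec, dotProduct_mulVec, ← star_mulVec, hHv, star_smul, smul_dotProduct,
      smul_eq_mul]
  exact mul_right_cancel₀ hc (by rw [← hleft, ← hright, hD])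

theorem star_eq_of_mem_spectrum_of_conjTranspose_mul_eq [DecidableEq n] (hΘ : Θ.PosDef)
    (hD : Hᴴ * Θ = Θ * H) {μ : 𝕜} (hμ : μ ∈ spectrum 𝕜 H) : star μ = μ := by
  obtain ⟨v, hv, hHv⟩ := exists_mulVec_eq_smul_of_mem_spectrum hμ
  exact star_eq_of_mulVec_eq_smul_of_conjTranspose_mul_eq hΘ hD hv hHv

end Matrix

theorem stmt_0_general {N : ℕ} (H Th : Matrix (Fin N) (Fin N) ℂ)
    (hpos : Th.PosDef)
    (hD : Hᴴ * Th = Th * H) :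
    ∀ μ ∈ spectrum ℂ H, μ.im = 0 := fun _ hμ =>
  Complex.conj_eq_iff_im.mp (Matrix.star_eq_of_mem_spectrum_of_conjTranspose_mul_eq hpos hD hμ)

theorem stmt_0 {N : ℕ} (H Th : Matrix (Fin N) (Fin N) ℂ)
    (hpos : Th.PosDef) (hinv : IsUnit Th)
    (hD : Hᴴ * Th = Th * H) :
    ∀ μ ∈ spectrum ℂ H, μ.im = 0 :=
  stmt_0_general H Th hpos hD
end

section
/- For a real N×N matrix H with real simple (nondegenerate) spectrum, the set of real symmetric N×N matrices Θ satisfying HᵀΘ = ΘH forms a real vector space of dimension exactly N. -/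
open scoped Matrix

/-- The space of real symmetric solutions Θ of HᵀΘ = ΘH. -/
def solSpace {N : ℕ} (H : Matrix (Fin N) (Fin N) ℝ) :
    Submodule ℝ (Matrix (Fin N) (Fin N) ℝ) where
  carrier := {Th | Th.IsSymm ∧ Hᵀ * Th = Th * H}
  add_mem' := by
    rintro A B ⟨hA1, hA2⟩ ⟨hB1, hB2⟩
    exact ⟨by simp [Matrix.IsSymm, Matrix.transpose_add, hA1.eq, hB1.eq],
      by simp [Matrix.mul_add, Matrix.add_mul, hA2, hB2]⟩
  zero_mem' := ⟨by simp [Matrix.IsSymm], by simp⟩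
  smul_mem' := by
    rintro c A ⟨hA1, hA2⟩
    exact ⟨by simp [Matrix.IsSymm, Matrix.transpose_smul, hA1.eq],
      by simp [Matrix.mul_smul, Matrix.smul_mul, hA2]⟩

/-- For a real N×N matrix H with N distinct real eigenvalues,
the real symmetric solutions of HᵀΘ = ΘH form a space of dimension exactly N. -/
theorem stmt_3 {N : ℕ} (H P : Matrix (Fin N) (Fin N) ℝ) (E : Fin N → ℝ)
    (hE : Function.Injective E) (hP : IsUnit P.det)
    (hdiag : H = P * Matrix.diagonal E * P⁻¹) :
    Module.finrank ℝ (solSpace H) = N := by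
  have h1 : P * P⁻¹ = 1 := Matrix.mul_nonsing_inv P hP
  have h2 : P⁻¹ * P = 1 := Matrix.nonsing_inv_mul P hP
  have h1t : (P⁻¹)ᵀ * Pᵀ = 1 := by rw [← Matrix.transpose_mul, h1, Matrix.transpose_one]
  have h2t : Pᵀ * (P⁻¹)ᵀ = 1 := by rw [← Matrix.transpose_mul, h2, Matrix.transpose_one]
  have hHt : Hᵀ = (P⁻¹)ᵀ * Matrix.diagonal E * Pᵀ := by
    rw [hdiag]
    rw [Matrix.transpose_mul, Matrix.transpose_mul, Matrix.diagonal_transpose, Matrix.mul_assoc]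
  -- key : for Θ in the solution space, Pᵀ Θ P is diagonal
  have key : ∀ Th : Matrix (Fin N) (Fin N) ℝ, Hᵀ * Th = Th * H →
      Pᵀ * Th * P = Matrix.diagonal (fun i => (Pᵀ * Th * P) i i) := by
    intro Th hTh
    set M := Pᵀ * Th * P with hM
    have hcomm : Matrix.diagonal E * M = M * Matrix.diagonal E := by
      have : Pᵀ * (Hᵀ * Th) * P = Pᵀ * (Th * H) * P := by rw [hTh]
      calc Matrix.diagonal E * M
          = Pᵀ * (P⁻¹)ᵀ * Matrix.diagonal E * Pᵀ * Th * P := by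
            rw [h2t]; simp [hM, Matrix.mul_assoc]
        _ = Pᵀ * (Hᵀ * Th) * P := by rw [hHt]; simp [Matrix.mul_assoc]
        _ = Pᵀ * (Th * H) * P := this
        _ = Pᵀ * Th * (P * Matrix.diagonal E * (P⁻¹ * P)) := by
            rw [hdiag]; simp [Matrix.mul_assoc]
        _ = M * Matrix.diagonal E := by rw [h2]; simp [hM, Matrix.mul_assoc]
    ext i j
    by_cases hij : i = j
    · subst hij; simp
    · have := congrFun (congrFun hcomm i) j
      simp [Matrix.mul_apply, Matrix.diagonal_apply, Finset.sum_ite_eq, Finset.sum_ite_eq'] at this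
      have hz : M i j = 0 := by
        by_contra hne
        exact hij (hE (mul_left_cancel₀ hne (by linarith [this])))
      simp [Matrix.diagonal_apply, hij, hz]
  -- the linear equivalence with Fin N → ℝ
  have e : (solSpace H) ≃ₗ[ℝ] (Fin N → ℝ) :=
    { toFun := fun Th i => (Pᵀ * Th.1 * P) i i
      map_add' := by intro A B; funext i; simp [Matrix.mul_add, Matrix.add_mul]
      map_smul' := by intro c A; funext i; simp [Matrix.mul_smul, Matrix.smul_mul]
      invFun := fun d => ⟨(P⁻¹)ᵀ * Matrix.diagonal d * P⁻¹, by
        constructor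
        · show ((P⁻¹)ᵀ * Matrix.diagonal d * P⁻¹)ᵀ = _
          simp [Matrix.transpose_mul, Matrix.mul_assoc]
        · rw [hHt, hdiag]
          calc (P⁻¹)ᵀ * Matrix.diagonal E * Pᵀ * ((P⁻¹)ᵀ * Matrix.diagonal d * P⁻¹)
              = (P⁻¹)ᵀ * Matrix.diagonal E * (Pᵀ * (P⁻¹)ᵀ) * Matrix.diagonal d * P⁻¹ := by
                simp [Matrix.mul_assoc]
            _ = (P⁻¹)ᵀ * (Matrix.diagonal E * Matrix.diagonal d) * P⁻¹ := by
                rw [h2t]; simp [Matrix.mul_assoc]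
            _ = (P⁻¹)ᵀ * (Matrix.diagonal d * Matrix.diagonal E) * P⁻¹ := by
                simp only [Matrix.diagonal_mul_diagonal, mul_comm]
            _ = (P⁻¹)ᵀ * Matrix.diagonal d * (P⁻¹ * P) * Matrix.diagonal E * P⁻¹ := by
                rw [h2]; simp [Matrix.mul_assoc]
            _ = (P⁻¹)ᵀ * Matrix.diagonal d * P⁻¹ * (P * Matrix.diagonal E * P⁻¹) := by
                simp [Matrix.mul_assoc]⟩
      left_inv := by
        rintro ⟨Th, hsym, heq⟩
        apply Subtype.ext
        show (P⁻¹)ᵀ * Matrix.diagonal _ * P⁻¹ = Th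
        rw [← key Th heq]
        calc (P⁻¹)ᵀ * (Pᵀ * Th * P) * P⁻¹
            = ((P⁻¹)ᵀ * Pᵀ) * Th * (P * P⁻¹) := by simp [Matrix.mul_assoc]
          _ = Th := by rw [h1t, h1]; simp
      right_inv := by
        intro d
        funext i
        show (Pᵀ * ((P⁻¹)ᵀ * Matrix.diagonal d * P⁻¹) * P) i i = d i
        have : Pᵀ * ((P⁻¹)ᵀ * Matrix.diagonal d * P⁻¹) * P
            = (Pᵀ * (P⁻¹)ᵀ) * Matrix.diagonal d * (P⁻¹ * P) := by simp [Matrix.mul_assoc]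
        rw [this, h2t, h2]
        simp }
  rw [e.finrank_eq]
  simp
end

section
/- Let a > 0 and let H = H^(4)(a) be the 4×4 tridiagonal Gegenbauer Hamiltonian. Then for arbitrary real parameters k, b, c, d, the symmetric matrix Θ with Θ₁₁=k, Θ₁₂=b, Θ₁₃=c, Θ₁₄=d, Θ₂₄ = c(a+1)/(2(a+2)a), Θ₂₃ = (ba+3b+2da²+4da+2d)/(2(a+3)a), Θ₃₄ = (−6da−10d+ba+3b)/(2(a+3)a(2a+1)), Θ₂₂ = (2ca²+ka+ca+2k)(a+1)/(2(a+2)a²), Θ₃₃ = (2ca³+ca²−7ca+ka²+5ka+6k)/(2(a+3)a²(2a+1)), Θ₄₄ = −(6ca²+10ca−ka²−5ka−6k)/(4a²(2a+1)(a+2)(a+1)) satisfies HᵀΘ = ΘH. -/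
open scoped Matrix

/-- The 4×4 Gegenbauer Hamiltonian. -/
noncomputable def H4 (a : ℝ) : Matrix (Fin 4) (Fin 4) ℝ :=
  !![0, 1/(2*a), 0, 0;
     2*a/(2*a+2), 0, 1/(2*a+2), 0;
     0, (2*a+1)/(2*a+4), 0, 1/(2*a+4);
     0, 0, (2*a+2)/(2*a+6), 0]

set_option maxHeartbeats 4000000 in
/-- the explicit four-parameter family of symmetric solutions
of the Dieudonné equation for H^(4)(a). -/
theorem stmt_8 (a k b c d : ℝ) (ha : 0 < a) :
    (H4 a)ᵀ *
      !![k, b, c, d;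
         b, (2*c*a^2 + k*a + c*a + 2*k) * (a+1) / (2*(a+2)*a^2),
            (b*a + 3*b + 2*d*a^2 + 4*d*a + 2*d) / (2*(a+3)*a),
            c*(a+1) / (2*(a+2)*a);
         c, (b*a + 3*b + 2*d*a^2 + 4*d*a + 2*d) / (2*(a+3)*a),
            (2*c*a^3 + c*a^2 - 7*c*a + k*a^2 + 5*k*a + 6*k) / (2*(a+3)*a^2*(2*a+1)),
            (-6*d*a - 10*d + b*a + 3*b) / (2*(a+3)*a*(2*a+1));
         d, c*(a+1) / (2*(a+2)*a),
            (-6*d*a - 10*d + b*a + 3*b) / (2*(a+3)*a*(2*a+1)),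
            -(6*c*a^2 + 10*c*a - k*a^2 - 5*k*a - 6*k) / (4*a^2*(2*a+1)*(a+2)*(a+1))] =
    !![k, b, c, d;
         b, (2*c*a^2 + k*a + c*a + 2*k) * (a+1) / (2*(a+2)*a^2),
            (b*a + 3*b + 2*d*a^2 + 4*d*a + 2*d) / (2*(a+3)*a),
            c*(a+1) / (2*(a+2)*a);
         c, (b*a + 3*b + 2*d*a^2 + 4*d*a + 2*d) / (2*(a+3)*a),
            (2*c*a^3 + c*a^2 - 7*c*a + k*a^2 + 5*k*a + 6*k) / (2*(a+3)*a^2*(2*a+1)),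
            (-6*d*a - 10*d + b*a + 3*b) / (2*(a+3)*a*(2*a+1));
         d, c*(a+1) / (2*(a+2)*a),
            (-6*d*a - 10*d + b*a + 3*b) / (2*(a+3)*a*(2*a+1)),
            -(6*c*a^2 + 10*c*a - k*a^2 - 5*k*a - 6*k) / (4*a^2*(2*a+1)*(a+2)*(a+1))]
      * H4 a := by
  have h1 : a ≠ 0 := ne_of_gt ha
  have h2 : a + 1 ≠ 0 := by positivity
  have h3 : a + 2 ≠ 0 := by positivity
  have h4 : a + 3 ≠ 0 := by positivity
  have h5 : 2*a + 1 ≠ 0 := by positivity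
  have h6 : 2*a + 2 ≠ 0 := by positivity
  have h7 : 2*a + 4 ≠ 0 := by positivity
  have h8 : 2*a + 6 ≠ 0 := by positivity
  have hT : (H4 a)ᵀ = !![0, 2*a/(2*a+2), 0, 0;
      1/(2*a), 0, (2*a+1)/(2*a+4), 0;
      0, 1/(2*a+2), 0, (2*a+2)/(2*a+6);
      0, 0, 1/(2*a+4), 0] := by
    unfold H4
    ext i j
    fin_cases i <;> fin_cases j <;> simp [Matrix.vecHead, Matrix.vecTail]
  rw [hT]
  unfold H4
  ext i j
  fin_cases i <;> fin_cases j <;>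
    simp [Matrix.mul_apply, Fin.sum_univ_four, Matrix.vecHead, Matrix.vecTail] <;>
    (try field_simp) <;>
    first | ring1 | exact Or.inl (by ring1) | exact Or.inl trivial | exact Or.inr trivial
end

section
/- For the 4×4 Gegenbauer Hamiltonian H^(4)(a) with a > 0, every real symmetric solution Θ of HᵀΘ = ΘH is uniquely determined by its first row (Θ₁₁, Θ₁₂, Θ₁₃, Θ₁₄); i.e., the map sending a symmetric solution to its first row is injective. -/
open scoped Matrix

/-- every symmetric solution of HᵀΘ = ΘH for H = H^(4)(a),
a > 0, is uniquely determined by its first row. -/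
theorem stmt_9 (a : ℝ) (ha : 0 < a)
    (T1 T2 : Matrix (Fin 4) (Fin 4) ℝ)
    (h1s : T1.IsSymm) (h2s : T2.IsSymm)
    (h1 : (H4 a)ᵀ * T1 = T1 * H4 a) (h2 : (H4 a)ᵀ * T2 = T2 * H4 a)
    (hrow : ∀ j, T1 0 j = T2 0 j) :
    T1 = T2 := by
  have hH : (H4 a)ᵀ * (T1 - T2) = (T1 - T2) * H4 a := by
    rw [Matrix.mul_sub, Matrix.sub_mul, h1, h2]
  set D := T1 - T2 with hD
  have hsym : ∀ i j, D i j = D j i := by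
    intro i j
    have e1 := h1s.apply i j
    have e2 := h2s.apply i j
    simp only [hD, Matrix.sub_apply]
    rw [e1, e2]
  have hrow0 : ∀ j, D 0 j = 0 := fun j => sub_eq_zero.mpr (hrow j)
  have hcol0 : ∀ i, D i 0 = 0 := fun i => by rw [hsym]; exact hrow0 i
  have hT : (H4 a)ᵀ = !![0, 2*a/(2*a+2), 0, 0;
      1/(2*a), 0, (2*a+1)/(2*a+4), 0;
      0, 1/(2*a+2), 0, (2*a+2)/(2*a+6);
      0, 0, 1/(2*a+4), 0] := by
    ext i j
    fin_cases i <;> fin_cases j <;> simp [H4, Matrix.vecHead, Matrix.vecTail]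
  have key : ∀ i j, ((H4 a)ᵀ * D) i j = (D * (H4 a)) i j := fun i j => by rw [hH]
  have hb : 2*a/(2*a+2) ≠ 0 := by positivity
  have hc : (2*a+1)/(2*a+4) ≠ 0 := by positivity
  have hd : (2*a+2)/(2*a+6) ≠ 0 := by positivity
  have e01 := key 0 1
  simp [hT, Matrix.mul_apply, Fin.sum_univ_four, Matrix.vecHead, Matrix.vecTail, hrow0, hcol0] at e01
  have d11 : D 1 1 = 0 := by
    rcases e01 with (h | h) | h
    · linarith
    · linarith
    · exact h
  have e02 := key 0 2
  simp [hT, Matrix.mul_apply, Fin.sum_univ_four, Matrix.vecHead, Matrix.vecTail, hrow0, hcol0] at e02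
  have d12 : D 1 2 = 0 := by
    rcases e02 with (h | h) | h
    · linarith
    · linarith
    · exact h
  have d21 : D 2 1 = 0 := by rw [hsym]; exact d12
  have e03 := key 0 3
  simp [hT, Matrix.mul_apply, Fin.sum_univ_four, Matrix.vecHead, Matrix.vecTail, hrow0, hcol0] at e03
  have d13 : D 1 3 = 0 := by
    rcases e03 with (h | h) | h
    · linarith
    · linarith
    · exact h
  have d31 : D 3 1 = 0 := by rw [hsym]; exact d13
  have e12 := key 1 2
  simp [hT, Matrix.mul_apply, Fin.sum_univ_four, Matrix.vecHead, Matrix.vecTail, hrow0, hcol0,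
    d11, d12, d21, d13, d31] at e12
  have d22 : D 2 2 = 0 := by
    rcases e12 with (h | h) | h
    · linarith
    · linarith
    · exact h
  have e13 := key 1 3
  simp [hT, Matrix.mul_apply, Fin.sum_univ_four, Matrix.vecHead, Matrix.vecTail, hrow0, hcol0,
    d11, d12, d21, d13, d31, d22] at e13
  have d23 : D 2 3 = 0 := by
    rcases e13 with (h | h) | h
    · linarith
    · linarith
    · exact h
  have d32 : D 3 2 = 0 := by rw [hsym]; exact d23
  have e23 := key 2 3
  simp [hT, Matrix.mul_apply, Fin.sum_univ_four, Matrix.vecHead, Matrix.vecTail, hrow0, hcol0,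
    d11, d12, d21, d13, d31, d22, d23, d32] at e23
  have d33 : D 3 3 = 0 := by
    rcases e23 with (h | h) | h
    · linarith
    · linarith
    · exact h
  have hzero : ∀ i j, D i j = 0 := by
    intro i j
    fin_cases i <;> fin_cases j <;>
      first
        | exact hrow0 _
        | exact hcol0 _
        | exact d11 | exact d12 | exact d13 | exact d21 | exact d22 | exact d23
        | exact d31 | exact d32 | exact d33
  ext i j
  have h := hzero i j
  rw [hD, Matrix.sub_apply] at h
  linarith
end

section
/- Let H be a real N×N tridiagonal matrix with zero diagonal and nonzero off-diagonal entries (H_{k,k+1} ≠ 0 and H_{k+1,k} ≠ 0 for all k). Then every real symmetric N×N matrix Θ satisfying HᵀΘ = ΘH is uniquely determined by its first row, and the map from solutions to first rows is linear and injective; hence the solution space has dimension at most N. -/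
open scoped Matrix

lemma key_lemma {N : ℕ} (hN : 0 < N) (H : Matrix (Fin N) (Fin N) ℝ)
    (htri : ∀ i j : Fin N, ((i : ℕ) + 1 < (j : ℕ) ∨ (j : ℕ) + 1 < (i : ℕ)) → H i j = 0)
    (hsub : ∀ i j : Fin N, (i : ℕ) = (j : ℕ) + 1 → H i j ≠ 0)
    (Th : Matrix (Fin N) (Fin N) ℝ) (heq : Hᵀ * Th = Th * H)
    (h0 : ∀ j, Th ⟨0, hN⟩ j = 0) : Th = 0 := by
  have main : ∀ m : ℕ, ∀ hm : m < N, ∀ j, Th ⟨m, hm⟩ j = 0 := by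
    intro m
    induction m using Nat.strong_induction_on with
    | _ m ih =>
      intro hm j
      match m, ih, hm with
      | 0, ih, hm => exact h0 j
      | m+1, ih, hm =>
        have hm' : m < N := lt_trans (Nat.lt_succ_self m) hm
        have hEq := congrFun (congrFun heq ⟨m, hm'⟩) j
        simp only [Matrix.mul_apply, Matrix.transpose_apply] at hEq
        have hrhs : ∑ k, Th ⟨m, hm'⟩ k * H k j = 0 := by
          apply Finset.sum_eq_zero; intro k _
          rw [ih m (Nat.lt_succ_self m) hm' k, zero_mul]
        have hlhs : ∑ k, H k ⟨m, hm'⟩ * Th k j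
            = H ⟨m+1, hm⟩ ⟨m, hm'⟩ * Th ⟨m+1, hm⟩ j := by
          rw [Finset.sum_eq_single (⟨m+1, hm⟩ : Fin N)]
          · intro k _ hk
            rcases lt_trichotomy (k : ℕ) (m+1) with h | h | h
            · have hz : Th k j = 0 := by
                have := ih k h k.isLt j
                simpa using this
              rw [hz, mul_zero]
            · exact absurd (Fin.ext h) hk
            · rw [htri k ⟨m, hm'⟩ (Or.inr (by simpa using h)), zero_mul]
          · intro h; exact absurd (Finset.mem_univ _) h
        rw [hlhs, hrhs] at hEq
        have hne := hsub ⟨m+1, hm⟩ ⟨m, hm'⟩ (by simp)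
        exact (mul_eq_zero.mp hEq).resolve_left hne
  ext i j
  have := main i i.isLt j
  simpa using this

/-- for a real tridiagonal H with zero diagonal and nonzero
off-diagonal entries, any symmetric solution of HᵀΘ = ΘH is determined by
its first row; the solution space has dimension at most N. -/
theorem stmt_10 {N : ℕ} (hN : 0 < N) (H : Matrix (Fin N) (Fin N) ℝ)
    (htri : ∀ i j : Fin N, ((i : ℕ) + 1 < (j : ℕ) ∨ (j : ℕ) + 1 < (i : ℕ)) → H i j = 0)
    (hdiag : ∀ i, H i i = 0)
    (hsup : ∀ i j : Fin N, (j : ℕ) = (i : ℕ) + 1 → H i j ≠ 0)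
    (hsub : ∀ i j : Fin N, (i : ℕ) = (j : ℕ) + 1 → H i j ≠ 0) :
    (∀ T1 T2 : Matrix (Fin N) (Fin N) ℝ,
        T1.IsSymm → T2.IsSymm → Hᵀ * T1 = T1 * H → Hᵀ * T2 = T2 * H →
        (∀ j, T1 ⟨0, hN⟩ j = T2 ⟨0, hN⟩ j) → T1 = T2) ∧
      Module.finrank ℝ (solSpace H) ≤ N := by
  constructor
  · intro T1 T2 _ _ h1 h2 hrow
    have hz : T1 - T2 = 0 := by
      apply key_lemma hN H htri hsub
      · rw [Matrix.mul_sub, Matrix.sub_mul, h1, h2]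
      · intro j
        simp [Matrix.sub_apply, hrow j]
    exact sub_eq_zero.mp hz
  · let f : solSpace H →ₗ[ℝ] (Fin N → ℝ) :=
      { toFun := fun Th => Th.val ⟨0, hN⟩
        map_add' := fun a b => rfl
        map_smul' := fun c a => rfl }
    have hinj : Function.Injective f := by
      rw [← LinearMap.ker_eq_bot, LinearMap.ker_eq_bot']
      intro a ha
      have h0 : ∀ j, a.val ⟨0, hN⟩ j = 0 := fun j => congrFun ha j
      have := key_lemma hN H htri hsub a.val a.2.2 h0
      exact Subtype.ext this
    calc Module.finrank ℝ (solSpace H)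
        ≤ Module.finrank ℝ (Fin N → ℝ) :=
          LinearMap.finrank_le_finrank_of_injective hinj
      _ = N := by simp
end

section
/- If H is a real N×N matrix with N distinct real eigenvalues E₁,…,E_N and corresponding real eigenvectors v₁,…,v_N, then for any positive reals κ₁,…,κ_N the matrix Θ = Σₙ κₙ wₙwₙᵀ, where wₙ are the eigenvectors of Hᵀ (normalized so that wₘᵀvₙ = δ_{mn}), is symmetric positive definite and satisfies HᵀΘ = ΘH. -/
/-! Let `W` be the matrix with rows `wₙ`, so that `Θ = Wᵀ diag(κ) W`. Biorthogonality says `W`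
has a right inverse (the matrix with columns `vₙ`), so `Θ` is congruent to the positive diagonal
matrix `diag(κ)`. The eigen-equations for `Hᵀ` read `W H = diag(E) W`, hence
`Hᵀ Θ = Wᵀ diag(E) diag(κ) W = Wᵀ diag(κ) diag(E) W = Θ H`. -/

open Matrix

namespace Matrix

variable {ι m R : Type*} [Fintype ι] [DecidableEq ι]

theorem sum_smul_vecMulVec_self_eq [CommSemiring R] (w : ι → m → R) (κ : ι → R) :
    ∑ i, κ i • vecMulVec (w i) (w i) = (of w)ᵀ * diagonal κ * of w := by
  ext j k
  rw [Matrix.mul_assoc, mul_apply]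
  simp only [sum_apply, smul_apply, vecMulVec_apply, smul_eq_mul, diagonal_mul, transpose_apply,
    of_apply]
  exact Finset.sum_congr rfl fun i _ => by ring

theorem of_mul_eq_diagonal_mul_of [Fintype m] [CommSemiring R] {H : Matrix m m R}
    {w : ι → m → R} {E : ι → R} (hw : ∀ i, Hᵀ *ᵥ w i = E i • w i) :
    of w * H = diagonal E * of w := by
  ext i j
  rw [diagonal_mul]
  simpa [mulVec_transpose, vecMul, dotProduct, mul_apply] using congrFun (hw i) j

theorem transpose_mul_eq_mul_of_mul_eq_diagonal_mul [Fintype m] [CommSemiring R]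
    {H : Matrix m m R} {W : Matrix ι m R} {E : ι → R} (hWH : W * H = diagonal E * W)
    (κ : ι → R) :
    Hᵀ * (Wᵀ * diagonal κ * W) = (Wᵀ * diagonal κ * W) * H := by
  have hHW : Hᵀ * Wᵀ = Wᵀ * diagonal E := by
    rw [← transpose_mul, hWH, transpose_mul, diagonal_transpose]
  calc Hᵀ * (Wᵀ * diagonal κ * W) = Wᵀ * (diagonal E * diagonal κ) * W := by
        simp only [← Matrix.mul_assoc, hHW]
    _ = Wᵀ * diagonal κ * (W * H) := by
        rw [diagonal_mul_diagonal, hWH, funext fun i => mul_comm (E i) (κ i),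
          ← diagonal_mul_diagonal]
        simp only [Matrix.mul_assoc]
    _ = (Wᵀ * diagonal κ * W) * H := by simp only [Matrix.mul_assoc]

theorem mulVec_injective_of_biorthogonal [CommRing R] {v w : ι → ι → R}
    (hbi : ∀ i j, w i ⬝ᵥ v j = if i = j then 1 else 0) :
    Function.Injective (of w).mulVec := by
  have hwv : of w * (of v)ᵀ = 1 := by
    ext i j
    simpa [mul_apply, one_apply, dotProduct] using hbi i j
  exact mulVec_injective_of_isUnit ⟨⟨_, _, hwv, mul_eq_one_comm.mp hwv⟩, rfl⟩

end Matrix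

theorem stmt_15_general {N : ℕ} (H : Matrix (Fin N) (Fin N) ℝ)
    (E : Fin N → ℝ)
    (v w : Fin N → (Fin N → ℝ))
    (hw : ∀ n, Hᵀ.mulVec (w n) = E n • w n)
    (hbi : ∀ m n, w m ⬝ᵥ v n = if m = n then 1 else 0)
    (κ : Fin N → ℝ) (hκ : ∀ n, 0 < κ n) :
    (∑ n, κ n • Matrix.vecMulVec (w n) (w n)).IsSymm ∧
      (∑ n, κ n • Matrix.vecMulVec (w n) (w n)).PosDef ∧
      Hᵀ * (∑ n, κ n • Matrix.vecMulVec (w n) (w n)) =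
        (∑ n, κ n • Matrix.vecMulVec (w n) (w n)) * H := by
  rw [sum_smul_vecMulVec_self_eq]
  have hpos : ((of w)ᵀ * diagonal κ * of w).PosDef := by
    rw [← conjTranspose_eq_transpose_of_trivial]
    exact (posDef_diagonal_iff.mpr hκ).conjTranspose_mul_mul_same
      (mulVec_injective_of_biorthogonal hbi)
  exact ⟨isHermitian_iff_isSymm.mp hpos.isHermitian, hpos,
    transpose_mul_eq_mul_of_mul_eq_diagonal_mul (of_mul_eq_diagonal_mul_of hw) κ⟩

/-- for H with simple real spectrum, eigenvectors vₙ of H and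
biorthonormal eigenvectors wₙ of Hᵀ, and any positive κₙ, the matrix
Θ = Σₙ κₙ wₙwₙᵀ is symmetric positive definite and solves HᵀΘ = ΘH. -/
theorem stmt_15 {N : ℕ} (H : Matrix (Fin N) (Fin N) ℝ)
    (E : Fin N → ℝ) (hE : Function.Injective E)
    (v w : Fin N → (Fin N → ℝ))
    (hv : ∀ n, H.mulVec (v n) = E n • v n)
    (hw : ∀ n, Hᵀ.mulVec (w n) = E n • w n)
    (hbi : ∀ m n, w m ⬝ᵥ v n = if m = n then 1 else 0)
    (κ : Fin N → ℝ) (hκ : ∀ n, 0 < κ n) :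
    (∑ n, κ n • Matrix.vecMulVec (w n) (w n)).IsSymm ∧
      (∑ n, κ n • Matrix.vecMulVec (w n) (w n)).PosDef ∧
      Hᵀ * (∑ n, κ n • Matrix.vecMulVec (w n) (w n)) =
        (∑ n, κ n • Matrix.vecMulVec (w n) (w n)) * H :=
  stmt_15_general H E v w hw hbi κ hκ
end

section
/- Conversely, every real symmetric positive-definite solution Θ of HᵀΘ = ΘH, for H real with N distinct real eigenvalues, has the form Θ = Σₙ κₙ wₙwₙᵀ with some positive coefficients κₙ, where wₙ are the eigenvectors of Hᵀ. -/
open scoped Matrix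

/-!
Write `H = P D P⁻¹` with `D = diagonal E`. The rows `qₙ` of `P⁻¹` are eigenvectors of `Hᵀ`,
and since the `Eₙ` are distinct every eigenvector `wₙ` is a nonzero multiple `cₙ qₙ`.
The relation `HᵀΘ = ΘH` says that `M = PᵀΘP` commutes with `D`, so `M` is diagonal; it is
positive definite, hence has positive diagonal entries `mₙ`. Then
`Θ = (P⁻¹)ᵀ M P⁻¹ = Σₙ mₙ qₙqₙᵀ = Σₙ (mₙ / cₙ²) wₙwₙᵀ`.
-/

lemma eq_zero_of_mul_eq_mul_of_ne {R : Type*} [CommRing R] [NoZeroDivisors R] {a b x : R}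
    (hab : a ≠ b) (h : a * x = x * b) : x = 0 := by
  have : (a - b) * x = 0 := by rw [sub_mul, h, mul_comm]; ring
  exact (mul_eq_zero.mp this).resolve_left (sub_ne_zero.mpr hab)

namespace Matrix

variable {n R : Type*} [Fintype n] [DecidableEq n]

lemma eq_diagonal_diag_of_commute_diagonal [CommRing R] [NoZeroDivisors R] {E : n → R}
    (hE : Function.Injective E) {M : Matrix n n R} (h : diagonal E * M = M * diagonal E) :
    M = diagonal M.diag := by
  ext i j
  by_cases hij : i = j
  · subst hij; simp
  · rw [diagonal_apply_ne _ hij]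
    have hij' := congrFun (congrFun h i) j
    rw [diagonal_mul, mul_diagonal] at hij'
    exact eq_zero_of_mul_eq_mul_of_ne (hE.ne hij) hij'

lemma eq_single_of_vecMul_diagonal_eq_smul [CommRing R] [NoZeroDivisors R] {E : n → R}
    (hE : Function.Injective E) {u : n → R} {k : n} (h : u ᵥ* diagonal E = E k • u) :
    u = Pi.single k (u k) := by
  ext j
  by_cases hjk : j = k
  · subst hjk; simp
  · rw [Pi.single_eq_of_ne hjk]
    have hj := congrFun h j
    rw [vecMul_diagonal, Pi.smul_apply, smul_eq_mul] at hj
    exact eq_zero_of_mul_eq_mul_of_ne (hE.ne hjk).symm hj.symm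

lemma eq_smul_row_inv_of_vecMul_eq_smul [CommRing R] [NoZeroDivisors R] {E : n → R}
    (hE : Function.Injective E) {P : Matrix n n R} (hP : IsUnit P.det) {v : n → R} {k : n}
    (h : v ᵥ* (P * diagonal E * P⁻¹) = E k • v) :
    v = (v ᵥ* P) k • P⁻¹.row k := by
  have hu : (v ᵥ* P) ᵥ* diagonal E = E k • (v ᵥ* P) := by
    rw [← smul_vecMul, ← h, vecMul_vecMul, vecMul_vecMul, mul_assoc, nonsing_inv_mul _ hP,
      mul_one]
  calc v = (v ᵥ* P) ᵥ* P⁻¹ := by rw [vecMul_vecMul, mul_nonsing_inv _ hP, vecMul_one]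
    _ = Pi.single k ((v ᵥ* P) k) ᵥ* P⁻¹ := by
        rw [← eq_single_of_vecMul_diagonal_eq_smul hE hu]
    _ = (v ᵥ* P) k • P⁻¹.row k := single_vecMul _ _ _

lemma transpose_mul_diagonal_mul_eq_sum_vecMulVec [CommSemiring R] (A B : Matrix n n R)
    (d : n → R) : Aᵀ * diagonal d * B = ∑ i, d i • vecMulVec (A i) (B i) := by
  ext j l
  simp only [mul_apply, transpose_apply, diagonal_apply, mul_ite, mul_zero,
    Finset.sum_ite_eq', Finset.mem_univ, if_true, sum_apply, smul_apply, vecMulVec_apply,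
    smul_eq_mul]
  exact Finset.sum_congr rfl fun i _ => by ring

lemma transpose_mul_congruence_eq_congruence_mul [CommRing R] {P D Θ : Matrix n n R}
    (hP : IsUnit P.det) (h : (P * D * P⁻¹)ᵀ * Θ = Θ * (P * D * P⁻¹)) :
    Dᵀ * (Pᵀ * Θ * P) = Pᵀ * Θ * P * D := by
  have hleft : Dᵀ * Pᵀ = Pᵀ * (P * D * P⁻¹)ᵀ := by
    have hPt : Pᵀ * P⁻¹ᵀ = 1 := by rw [← transpose_mul, nonsing_inv_mul _ hP, transpose_one]
    simp only [transpose_mul, ← mul_assoc, hPt, one_mul]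
  have hright : P * D * P⁻¹ * P = P * D := by
    rw [mul_assoc, nonsing_inv_mul _ hP, mul_one]
  calc Dᵀ * (Pᵀ * Θ * P) = Pᵀ * ((P * D * P⁻¹)ᵀ * Θ) * P := by
        rw [← mul_assoc, ← mul_assoc, hleft, mul_assoc Pᵀ]
    _ = Pᵀ * Θ * P * D := by
        rw [h, mul_assoc, mul_assoc, hright, ← mul_assoc, ← mul_assoc, mul_assoc Pᵀ]

end Matrix

open Matrix in
theorem stmt_16_general {N : ℕ} (H : Matrix (Fin N) (Fin N) ℝ)
    (E : Fin N → ℝ) (hE : Function.Injective E)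
    (w : Fin N → (Fin N → ℝ)) (hw0 : ∀ n, w n ≠ 0)
    (hw : ∀ n, Hᵀ.mulVec (w n) = E n • w n)
    (hHdiag : ∃ P : Matrix (Fin N) (Fin N) ℝ, IsUnit P.det ∧
      H = P * Matrix.diagonal E * P⁻¹)
    (Th : Matrix (Fin N) (Fin N) ℝ)
    (hpd : Th.PosDef) (hD : Hᵀ * Th = Th * H) :
    ∃ κ : Fin N → ℝ, (∀ n, 0 < κ n) ∧
      Th = ∑ n, κ n • Matrix.vecMulVec (w n) (w n) := by
  obtain ⟨P, hP, rfl⟩ := hHdiag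
  set M := Pᵀ * Th * P
  have hMdiag : M = diagonal M.diag := eq_diagonal_diag_of_commute_diagonal hE <| by
    simpa using transpose_mul_congruence_eq_congruence_mul hP hD
  have hMpos : ∀ n, 0 < M n n := fun n => by
    simpa [M, conjTranspose_eq_transpose_of_trivial] using
      (hpd.conjTranspose_mul_mul_same (mulVec_injective_of_isUnit
        ((isUnit_iff_isUnit_det P).mpr hP))).diag_pos (i := n)
  have hTh : Th = (P⁻¹)ᵀ * diagonal M.diag * P⁻¹ := by
    have hPt : (P⁻¹)ᵀ * Pᵀ = 1 := by rw [← transpose_mul, mul_nonsing_inv _ hP, transpose_one]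
    rw [← hMdiag]
    simp only [M, ← mul_assoc, hPt, one_mul]
    rw [mul_assoc, mul_nonsing_inv _ hP, mul_one]
  set c : Fin N → ℝ := fun n => (w n ᵥ* P) n
  have hwc : ∀ n, w n = c n • P⁻¹ n := fun n =>
    eq_smul_row_inv_of_vecMul_eq_smul hE hP (by rw [← mulVec_transpose, hw])
  have hc : ∀ n, c n ≠ 0 := fun n hcn => hw0 n (by rw [hwc n, hcn, zero_smul])
  refine ⟨fun n => M n n / c n ^ 2,
    fun n => div_pos (hMpos n) (pow_two_pos_of_ne_zero (hc n)), ?_⟩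
  rw [hTh, transpose_mul_diagonal_mul_eq_sum_vecMulVec]
  refine Finset.sum_congr rfl fun n _ => ?_
  rw [hwc n, smul_vecMulVec, vecMulVec_smul, smul_smul, smul_smul, diag_apply]
  congr 1
  field_simp [hc n]

/-- every real symmetric positive-definite solution of
HᵀΘ = ΘH, for H with N distinct real eigenvalues, is Θ = Σₙ κₙ wₙwₙᵀ with
positive κₙ, where wₙ are eigenvectors of Hᵀ. -/
theorem stmt_16 {N : ℕ} (H : Matrix (Fin N) (Fin N) ℝ)
    (E : Fin N → ℝ) (hE : Function.Injective E)
    (w : Fin N → (Fin N → ℝ)) (hw0 : ∀ n, w n ≠ 0)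
    (hw : ∀ n, Hᵀ.mulVec (w n) = E n • w n)
    (hHdiag : ∃ P : Matrix (Fin N) (Fin N) ℝ, IsUnit P.det ∧
      H = P * Matrix.diagonal E * P⁻¹)
    (Th : Matrix (Fin N) (Fin N) ℝ)
    (hs : Th.IsSymm) (hpd : Th.PosDef) (hD : Hᵀ * Th = Th * H) :
    ∃ κ : Fin N → ℝ, (∀ n, 0 < κ n) ∧
      Th = ∑ n, κ n • Matrix.vecMulVec (w n) (w n) :=
  stmt_16_general H E hE w hw0 hw hHdiag Th hpd hD
end
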